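/- arXiv:1607.00819 — 5 statements merged into one kernel-verified Lean document; each statement's English description precedes it below -/
import Mathlib

section
/- Let (A, R, D) be a finite EAFC, let X ⊆ A be a conflict-free extension of (A, R, D), and suppose an argument a ∈ X defeats_X an argument b ∈ A. Then there is no reinstatement set for this defeat_X on X if and only if there exists a sequence ((Z_1,(x_1,y_1)),…,(Z_n,(x_n,y_n))) of distinct defense attacks from D such that: (x_n, y_n) = (a, b); no two pairs (x_i, y_i) and (x_j, y_j) with i ≠ j are equal; for every (Z_i,(x_i,y_i)) with 1 < i ≤ n, either no argument h ∈ X defeats_X any argument z ∈ Z_i, or for every such defeat there exists a set L ⊆ A with (L,(h,z)) ∈ {(Z_1,(x_1,y_1)),…,(Z_{i-1},(x_{i-1},y_{i-1}))}; and no argument in X defeats_X any argument in Z_1. -/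
open Classical

universe u

namespace Dialectical

variable {α : Type u}

/-! ### Two-valued (partial) interpretations -/

/-- A partial two-valued interpretation: `some true` = t, `some false` = f, `none` = undefined. -/
abbrev Interp (α : Type u) := α → Option Bool

/-- The domain of an interpretation. -/
def idom (v : Interp α) : Set α := {a | v a ≠ none}

/-- The set of arguments mapped to t. -/
def tset (v : Interp α) : Set α := {a | v a = some true}

/-- The set of arguments mapped to f. -/
def fset (v : Interp α) : Set α := {a | v a = some false}

/-- `w` is a completion of `v` to the set `Z`. -/
def Completion (v w : Interp α) (Z : Set α) : Prop :=
  idom w = Z ∧ ∀ a ∈ idom v, w a = v a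

/-- The interpretation assigning t on `T` and f on `F' \ T`. -/
noncomputable def mkInterp (T F' : Set α) : Interp α :=
  fun a => if a ∈ T then some true else if a ∈ F' then some false else none

/-! ### Abstract dialectical frameworks -/

/-- An abstract dialectical framework: links and acceptance conditions
(`true` = in, `false` = out). -/
structure ADF (α : Type u) where
  L : α → α → Prop
  C : α → Set α → Bool

namespace ADF

variable (D : ADF α)

/-- The parents of an argument. -/
def par (a : α) : Set α := {p | D.L p a}

/-- Evaluating the acceptance condition of `s` under an interpretation. -/
def evalCond (s : α) (w : Interp α) : Bool := D.C s (tset w ∩ D.par s)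

/-- `s` is decisively in w.r.t. `v`. -/
def DecisivelyIn (v : Interp α) (s : α) : Prop :=
  ∀ w : Interp α, Completion v w (idom v ∪ D.par s) → D.evalCond s w = true

/-- `s` is decisively out w.r.t. `v`. -/
def DecisivelyOut (v : Interp α) (s : α) : Prop :=
  ∀ w : Interp α, Completion v w (idom v ∪ D.par s) → D.evalCond s w = false

/-- `v` is a minimal decisively in interpretation for `s` (`v ∈ min_dec(in,s)`). -/
def MinDecIn (v : Interp α) (s : α) : Prop :=
  D.DecisivelyIn v s ∧
  ∀ w : Interp α, D.DecisivelyIn w s → tset w ⊆ tset v → fset w ⊆ fset v →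
    tset w = tset v ∧ fset w = fset v

/-- `pd` is a positive dependency function on `X`. -/
def PDFun (X : Set α) (pd : α → Option (Interp α)) : Prop :=
  ∀ a ∈ X,
    (∀ v, pd a = some v → D.MinDecIn v a ∧ tset v ⊆ X) ∧
    (pd a = none → ¬ ∃ v, D.MinDecIn v a ∧ tset v ⊆ X)

end ADF

/-- The subset of `X` on which `pd` is non-null. -/
def soundDom (X : Set α) (pd : α → Option (Interp α)) : Set α :=
  {a ∈ X | pd a ≠ none}

namespace ADF
variable (D : ADF α)

/-- `pd` is a maximally sound pd-function of `X`. -/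
def MaxSound (X : Set α) (pd : α → Option (Interp α)) : Prop :=
  D.PDFun X pd ∧
  ¬ ∃ (X'' : Set α) (pd' : α → Option (Interp α)),
      D.PDFun X'' pd' ∧ (∀ a ∈ X'', pd' a ≠ none) ∧
      soundDom X pd ⊂ X'' ∧ X'' ⊆ X ∧
      ∀ a ∈ soundDom X pd, pd' a = pd a

end ADF

/-- The t-part of the interpretation assigned by `pd` to `a`. -/
def pdT (pd : α → Option (Interp α)) (a : α) : Set α :=
  {b | ∃ v, pd a = some v ∧ b ∈ tset v}

/-- The f-part of the interpretation assigned by `pd` to `a`. -/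
def pdF (pd : α → Option (Interp α)) (a : α) : Set α :=
  {b | ∃ v, pd a = some v ∧ b ∈ fset v}

/-- `(Fs, G, B)` is a partially acyclic positive dependency evaluation for `x`
based on the pd-function `pd` of `X`. -/
def IsPAEvalWith (pd : α → Option (Interp α)) (X : Set α)
    (x : α) (Fs : Set α) (G : List α) (B : Set α) : Prop :=
  (∀ a ∈ G, a ∉ Fs) ∧ G.Nodup ∧
  x ∈ X ∧ Fs ⊆ X ∧ (∀ a ∈ G, a ∈ X) ∧
  (∀ a ∈ Fs, pd a ≠ none) ∧ (∀ a ∈ G, pd a ≠ none) ∧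
  (G = [] → x ∈ Fs) ∧ (G ≠ [] → G.getLast? = some x) ∧
  (∀ i : ℕ, ∀ h : i < G.length,
      pdT pd (G.get ⟨i, h⟩) ⊆
        Fs ∪ {b | ∃ j : ℕ, ∃ hj : j < G.length, j < i ∧ G.get ⟨j, hj⟩ = b}) ∧
  (∀ a ∈ Fs, pdT pd a ⊆ Fs) ∧
  (∀ a ∈ Fs, ∃ b ∈ Fs, a ∈ pdT pd b) ∧
  B = (⋃ a ∈ Fs, pdF pd a) ∪ ⋃ a ∈ {c | c ∈ G}, pdF pd a

namespace ADF
variable (D : ADF α)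

/-- `(Fs, G, B)` is a partially acyclic positive dependency evaluation for `x` on `X`. -/
def PAEval (X : Set α) (x : α) (Fs : Set α) (G : List α) (B : Set α) : Prop :=
  ∃ pd, D.MaxSound X pd ∧ IsPAEvalWith pd X x Fs G B

/-- `(G, B)` is an acyclic positive dependency evaluation for `x` on `X`. -/
def AcyclicEval (X : Set α) (x : α) (G : List α) (B : Set α) : Prop :=
  D.PAEval X x ∅ G B

/-- The standard discarded set `X⁺`. -/
def stdDiscarded (X : Set α) : Set α :=
  {a | ∀ Fs G B, D.PAEval Set.univ a Fs G B → (B ∩ X).Nonempty}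

/-- The partially acyclic discarded set `X^{p+}`. -/
def pDiscarded (X : Set α) : Set α :=
  {a | ¬ ∃ Fs G B, D.PAEval Set.univ a Fs G B ∧ Fs ⊆ X ∧ B ∩ X = ∅}

/-- The acyclic discarded set `X^{a+}`. -/
def aDiscarded (X : Set α) : Set α :=
  {a | ∀ G B, D.AcyclicEval Set.univ a G B → (B ∩ X).Nonempty}

/-- The standard range of `X`. -/
noncomputable def stdRange (X : Set α) : Interp α := mkInterp X (D.stdDiscarded X \ X)

/-- The partially acyclic range of `X`. -/
noncomputable def pRange (X : Set α) : Interp α := mkInterp X (D.pDiscarded X \ X)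

/-- The acyclic range of `X`. -/
noncomputable def aRange (X : Set α) : Interp α := mkInterp X (D.aDiscarded X \ X)

/-- Conflict-freeness in an ADF. -/
def ConflictFree (X : Set α) : Prop := ∀ s ∈ X, D.C s (X ∩ D.par s) = true

/-- pd-acyclic conflict-freeness in an ADF. -/
def PDAcyclicCF (X : Set α) : Prop :=
  ∀ a ∈ X, ∃ G B, D.AcyclicEval X a G B ∧ B ∩ X = ∅

def CCAdmissible (X : Set α) : Prop :=
  D.ConflictFree X ∧ ∀ e ∈ X, D.DecisivelyIn (D.stdRange X) e

def CA2Admissible (X : Set α) : Prop :=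
  D.ConflictFree X ∧ ∀ e ∈ X, D.DecisivelyIn (D.pRange X) e

def AAAdmissible (X : Set α) : Prop :=
  D.PDAcyclicCF X ∧ ∀ e ∈ X, D.DecisivelyIn (D.aRange X) e

def CCComplete (X : Set α) : Prop :=
  D.CCAdmissible X ∧ ∀ e, D.DecisivelyIn (D.stdRange X) e → e ∈ X

def CA2Complete (X : Set α) : Prop :=
  D.CA2Admissible X ∧ ∀ e, D.DecisivelyIn (D.pRange X) e → e ∈ X

def AAComplete (X : Set α) : Prop :=
  D.AAAdmissible X ∧ ∀ e, D.DecisivelyIn (D.aRange X) e → e ∈ X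

def CCPreferred (X : Set α) : Prop :=
  D.CCAdmissible X ∧ ∀ Y, D.CCAdmissible Y → X ⊆ Y → X = Y

def CA2Preferred (X : Set α) : Prop :=
  D.CA2Admissible X ∧ ∀ Y, D.CA2Admissible Y → X ⊆ Y → X = Y

def AAPreferred (X : Set α) : Prop :=
  D.AAAdmissible X ∧ ∀ Y, D.AAAdmissible Y → X ⊆ Y → X = Y

/-- `X` is a model of the ADF. -/
def IsModel (X : Set α) : Prop :=
  D.ConflictFree X ∧ ∀ a, a ∉ X → D.C a (X ∩ D.par a) = false

/-- `X` is a stable extension of the ADF. -/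
def IsStable (X : Set α) : Prop :=
  D.PDAcyclicCF X ∧ D.aDiscarded X = Xᶜ

/-- `X` is the grounded extension (the least cc-complete extension). -/
def IsGrounded (X : Set α) : Prop :=
  D.CCComplete X ∧ ∀ Y, D.CCComplete Y → X ⊆ Y

/-- `X` is the acyclic grounded extension (the least aa-complete extension). -/
def IsAcyclicGrounded (X : Set α) : Prop :=
  D.AAComplete X ∧ ∀ Y, D.AAComplete Y → X ⊆ Y

/-- The link `(r,s)` is supporting. -/
def Supporting (r s : α) : Prop :=
  ¬ ∃ R' ⊆ D.par s, D.C s R' = true ∧ D.C s (R' ∪ {r}) = false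

/-- The link `(r,s)` is attacking. -/
def Attacking (r s : α) : Prop :=
  ¬ ∃ R' ⊆ D.par s, D.C s R' = false ∧ D.C s (R' ∪ {r}) = true

/-- Bipolar ADFs. -/
def IsBADF : Prop := ∀ r s, D.L r s → D.Supporting r s ∨ D.Attacking r s

/-- Positive dependency acyclic ADFs (AADF⁺): every partially acyclic evaluation is acyclic. -/
def IsAADFplus : Prop := ∀ X x Fs G B, D.PAEval X x Fs G B → Fs = ∅

end ADF

/-! ### Frameworks with sets of attacking arguments (SETAFs) -/

/-- A framework with sets of attacking arguments. -/
structure SETAF (α : Type u) where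
  R : Set α → α → Prop
  nonempty_of_R : ∀ S a, R S a → S.Nonempty

namespace SETAF

variable (sf : SETAF α)

/-- `X` is conflict-free in the SETAF. -/
def ConflictFree (X : Set α) : Prop := ¬ ∃ S ⊆ X, ∃ a ∈ X, sf.R S a

/-- The discarded set of `X` in the SETAF. -/
def discarded (X : Set α) : Set α := {b | ∃ S ⊆ X, sf.R S b}

/-- `X` defends `a` in the SETAF. -/
def Defends (X : Set α) (a : α) : Prop :=
  ∀ S, sf.R S a → ∃ s ∈ S, s ∈ sf.discarded X

def Admissible (X : Set α) : Prop := sf.ConflictFree X ∧ ∀ a ∈ X, sf.Defends X a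

def Complete (X : Set α) : Prop := sf.Admissible X ∧ ∀ a, sf.Defends X a → a ∈ X

def Preferred (X : Set α) : Prop :=
  sf.Admissible X ∧ ∀ Y, sf.Admissible Y → X ⊆ Y → X = Y

/-- `X` is the grounded extension: the least complete extension. -/
def IsGrounded (X : Set α) : Prop := sf.Complete X ∧ ∀ Y, sf.Complete Y → X ⊆ Y

def Stable (X : Set α) : Prop := sf.ConflictFree X ∧ sf.discarded X = Xᶜ

/-- The ADF corresponding to a SETAF. -/
noncomputable def toADF : ADF α where
  L x y := ∃ B : Set α, x ∈ B ∧ sf.R B y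
  C a B := decide (¬ ∃ S, sf.R S a ∧ S ⊆ B)

end SETAF

/-! ### Extended argumentation frameworks with collective defense attacks (EAFCs) -/

/-- An EAFC: binary attacks `R` and collective defense attacks `D` on attacks. -/
structure EAFC (α : Type u) where
  R : α → α → Prop
  D : Set α → α → α → Prop
  nonempty_of_D : ∀ C a b, D C a b → C.Nonempty
  attack_of_D : ∀ C a b, D C a b → R a b

namespace EAFC

variable (E : EAFC α)

/-- `a` defeats `b` w.r.t. `X`. -/
def Defeats (X : Set α) (a b : α) : Prop :=
  E.R a b ∧ ¬ ∃ C ⊆ X, E.D C a b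

/-- `RS` is a reinstatement set on `X` for the defeat of `b` by `a`. -/
def Reinstatement (X : Set α) (RS : Set (α × α)) (a b : α) : Prop :=
  RS.Finite ∧
  (∀ p ∈ RS, p.1 ∈ X ∧ E.Defeats X p.1 p.2) ∧
  (a, b) ∈ RS ∧
  ∀ p ∈ RS, ∀ C : Set α, E.D C p.1 p.2 → ∃ q ∈ RS, q.2 ∈ C

/-- The discarded set `X⁺` of `X` in the EAFC. -/
def discarded (X : Set α) : Set α :=
  {b | ∃ a ∈ X, E.Defeats X a b ∧ ∃ RS, E.Reinstatement X RS a b}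

/-- `X` defends `a` in the EAFC. -/
def Defends (X : Set α) (a : α) : Prop :=
  ∀ b, E.Defeats X b a → b ∈ E.discarded X

/-- `X` is conflict-free in the EAFC. -/
def ConflictFree (X : Set α) : Prop := ¬ ∃ a ∈ X, ∃ b ∈ X, E.Defeats X a b

def Admissible (X : Set α) : Prop := E.ConflictFree X ∧ ∀ a ∈ X, E.Defends X a

def Complete (X : Set α) : Prop := E.Admissible X ∧ ∀ a, E.Defends X a → a ∈ X

def Preferred (X : Set α) : Prop :=
  E.Admissible X ∧ ∀ Y, E.Admissible Y → X ⊆ Y → X = Y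

def Stable (X : Set α) : Prop :=
  E.ConflictFree X ∧ ∀ b, b ∉ X → ∃ a ∈ X, E.Defeats X a b

/-- The characteristic function of the EAFC. -/
def charFun (X : Set α) : Set α := {a | E.Defends X a}

/-- The grounded extension of the EAFC. -/
def grounded : Set α := ⋃ i : ℕ, E.charFun^[i] ∅

/-- Every argument has finitely many attackers, every attack finitely many defense attackers. -/
def Finitary : Prop :=
  (∀ a, {b | E.R b a}.Finite) ∧ ∀ a b, {C | E.D C a b}.Finite

/-- Strong consistency of an EAFC. -/
def StronglyConsistent : Prop :=
  ¬ ∃ (x y z : α) (X : Set α), E.R x y ∧ x ∈ X ∧ E.D X z y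

/-- The EAFC is bounded hierarchical. -/
def BoundedHierarchical : Prop :=
  ∃ n : ℕ, ∃ hn : 0 < n,
    ∃ (As : Fin n → Set α) (Rs : Fin n → α → α → Prop)
      (Ds : Fin n → Set α → α → α → Prop),
      (∀ C a b, ¬ Ds ⟨n - 1, Nat.sub_lt hn one_pos⟩ C a b) ∧
      (Set.univ = ⋃ i, As i) ∧
      (∀ a b, E.R a b ↔ ∃ i, Rs i a b) ∧
      (∀ C a b, E.D C a b ↔ ∃ i, Ds i C a b) ∧
      (∀ i a b, Rs i a b → a ∈ As i ∧ b ∈ As i) ∧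
      (∀ i C a b, Ds i C a b → Rs i a b ∧
        ∃ h : (i : ℕ) + 1 < n, C ⊆ As ⟨(i : ℕ) + 1, h⟩)

/-- The ADF corresponding to a strongly consistent EAFC. -/
noncomputable def toADF : ADF α where
  L a b := E.R a b ∨ ∃ (c : α) (X : Set α), a ∈ X ∧ E.D X c b
  C a B := decide (¬ ∃ x ∈ B, E.R x a ∧ ¬ ∃ B' ⊆ B, E.D B' x a)

end EAFC

/-! ### Argumentation frameworks with necessities (AFNs) -/

/-- An AFN: binary attacks `R` and necessity relation `N`. -/
structure AFN (α : Type u) where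
  R : α → α → Prop
  N : Set α → α → Prop
  nonempty_of_N : ∀ B a, N B a → B.Nonempty

namespace AFN

variable (fn : AFN α)

/-- `G` is a powerful sequence for `a` on `X`. -/
def PowerfulSeq (X : Set α) (G : List α) (a : α) : Prop :=
  G ≠ [] ∧ (∀ b ∈ G, b ∈ X) ∧ G.getLast? = some a ∧
  ∀ i : ℕ, ∀ h : i < G.length, ∀ B : Set α, fn.N B (G.get ⟨i, h⟩) →
    ∃ j : ℕ, ∃ hj : j < G.length, j < i ∧ G.get ⟨j, hj⟩ ∈ B

/-- `a` is powerful in `X`. -/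
def Powerful (X : Set α) (a : α) : Prop :=
  a ∈ X ∧ ∃ G, fn.PowerfulSeq X G a

/-- `X` is coherent. -/
def Coherent (X : Set α) : Prop := ∀ a ∈ X, fn.Powerful X a

/-- The discarded set `X^att` of `X` in the AFN. -/
def discardedAtt (X : Set α) : Set α :=
  {a | ∀ C, fn.Coherent C → a ∈ C → ∃ c ∈ C, ∃ e ∈ X, fn.R e c}

/-- `X` is conflict-free in the AFN. -/
def ConflictFree (X : Set α) : Prop := ¬ ∃ a ∈ X, ∃ b ∈ X, fn.R a b

/-- `X` is strongly coherent. -/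
def StronglyCoherent (X : Set α) : Prop := fn.ConflictFree X ∧ fn.Coherent X

/-- The deactivated set `X⁺` of `X` in the AFN. -/
def deactivated (X : Set α) : Set α :=
  {a | (∃ e ∈ X, fn.R e a) ∨ ∃ B, fn.N B a ∧ X ∩ B = ∅}

/-- `X` defends `a` in the AFN. -/
def Defends (X : Set α) (a : α) : Prop :=
  fn.Coherent (X ∪ {a}) ∧ ∀ b, fn.R b a → b ∈ fn.discardedAtt X

def Admissible (X : Set α) : Prop := fn.StronglyCoherent X ∧ ∀ a ∈ X, fn.Defends X a

def Complete (X : Set α) : Prop := fn.Admissible X ∧ ∀ a, fn.Defends X a → a ∈ X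

def Preferred (X : Set α) : Prop :=
  fn.Admissible X ∧ ∀ Y, fn.Admissible Y → X ⊆ Y → X = Y

/-- `X` is the grounded extension: the least complete extension. -/
def IsGrounded (X : Set α) : Prop := fn.Complete X ∧ ∀ Y, fn.Complete Y → X ⊆ Y

/-- Stability via completeness and the deactivated set. -/
def Stable (X : Set α) : Prop := fn.Complete X ∧ fn.deactivated X = Xᶜ

/-- Stability via strong coherence and the discarded set. -/
def StableAtt (X : Set α) : Prop :=
  fn.StronglyCoherent X ∧ fn.discardedAtt X = Xᶜ

/-- Strong consistency of an AFN: no argument is both supported and attacked by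
the same argument. -/
def StronglyConsistent : Prop :=
  ∀ a : α, {b | ∃ B, b ∈ B ∧ fn.N B a} ∩ {b | fn.R b a} = ∅

/-- The ADF corresponding to a strongly consistent AFN. -/
noncomputable def toADF : ADF α where
  L x y := fn.R x y ∨ ∃ B, x ∈ B ∧ fn.N B y
  C a P := decide (¬ ((∃ p ∈ P, fn.R p a) ∨ ∃ Z, fn.N Z a ∧ Z ∩ P = ∅))

end AFN

end Dialectical

/-!
A defense attack `(C, (x, y))` refutes the `X`-defeat `(x, y)` once every `X`-defeat of a member
of `C` has been refuted earlier; defense attack sequences and lists record refutations in such an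
order. By induction along a sequence, a reinstatement set never contains a defeat of a member of
some `Z i`, so it cannot answer the last defense attack, on `(a, b)`. Conversely, nothing can be
appended to a longest defense attack list, so the `X`-defeats missing from it form a
reinstatement set; it contains `(a, b)` unless `(a, b)` occurs in the list, and then the list up
to `(a, b)` is the required sequence.
-/

namespace Dialectical.EAFC

variable {α : Type*} (E : EAFC α) (X : Set α)

def IsDefenseAttackSeq (a b : α) (n : ℕ) (Z : Fin (n + 1) → Set α) (x y : Fin (n + 1) → α) :
    Prop :=
  (∀ i, E.D (Z i) (x i) (y i)) ∧
  Function.Injective (fun i => (Z i, x i, y i)) ∧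
  x (Fin.last n) = a ∧ y (Fin.last n) = b ∧
  Function.Injective (fun i => (x i, y i)) ∧
  (∀ i : Fin (n + 1), 0 < (i : ℕ) →
    (¬ ∃ h ∈ X, ∃ z ∈ Z i, E.Defeats X h z) ∨
    (∀ h ∈ X, ∀ z ∈ Z i, E.Defeats X h z →
      ∃ L : Set α, ∃ j : Fin (n + 1), (j : ℕ) < (i : ℕ) ∧
        Z j = L ∧ x j = h ∧ y j = z)) ∧
  ¬ ∃ h ∈ X, ∃ z ∈ Z 0, E.Defeats X h z

def IsDefenseAttackList (l : List (Set α × α × α)) : Prop :=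
  (∀ e ∈ l, E.D e.1 e.2.1 e.2.2) ∧ (l.map Prod.snd).Nodup ∧
  ∀ (i : ℕ) (hi : i < l.length), ∀ h ∈ X, ∀ z ∈ l[i].1, E.Defeats X h z →
    ∃ j < i, ∃ hj : j < l.length, l[j].2 = (h, z)

variable {E X}

namespace IsDefenseAttackList

theorem take {l : List (Set α × α × α)} (hl : E.IsDefenseAttackList X l) (k : ℕ) :
    E.IsDefenseAttackList X (l.take k) := by
  obtain ⟨hD, hnodup, hprev⟩ := hl
  refine ⟨fun e he => hD e (List.mem_of_mem_take he), ?_, ?_⟩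
  · rw [List.map_take]
    exact hnodup.sublist (List.take_sublist _ _)
  · intro i hi h hX z hz hhz
    rw [List.length_take] at hi
    rw [List.getElem_take] at hz
    obtain ⟨j, hji, hj, hjhz⟩ := hprev i (by omega) h hX z hz hhz
    exact ⟨j, hji, by rw [List.length_take]; omega, by rwa [List.getElem_take]⟩

theorem concat {l : List (Set α × α × α)} (hl : E.IsDefenseAttackList X l) {C : Set α}
    {p : α × α} (hC : E.D C p.1 p.2) (hp : p ∉ l.map Prod.snd)
    (hdefeats : ∀ h ∈ X, ∀ z ∈ C, E.Defeats X h z → (h, z) ∈ l.map Prod.snd) :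
    E.IsDefenseAttackList X (l ++ [(C, p)]) := by
  obtain ⟨hD, hnodup, hprev⟩ := hl
  refine ⟨?_, ?_, ?_⟩
  · intro e he
    rcases List.mem_append.mp he with he | he
    · exact hD e he
    · rw [List.mem_singleton.mp he]
      exact hC
  · simpa only [List.map_append, List.map_cons, List.map_nil, List.nodup_append,
      List.nodup_singleton, List.mem_singleton] using
      ⟨hnodup, trivial, fun q hq r hr hqr => hp (hr ▸ hqr ▸ hq)⟩
  · intro i hi h hX z hz hhz
    rw [List.length_append, List.length_singleton] at hi
    rcases Nat.lt_succ_iff_lt_or_eq.mp hi with hi | rfl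
    · rw [List.getElem_append_left hi] at hz
      obtain ⟨j, hji, hj, hjhz⟩ := hprev i hi h hX z hz hhz
      exact ⟨j, hji, by rw [List.length_append]; omega, by rwa [List.getElem_append_left hj]⟩
    · rw [List.getElem_concat_length rfl] at hz
      obtain ⟨j, hj, hjhz⟩ := List.getElem_of_mem (hdefeats h hX z hz hhz)
      rw [List.length_map] at hj
      exact ⟨j, hj, by rw [List.length_append]; omega,
        by simpa [List.getElem_append_left hj] using hjhz⟩

theorem length_le_card [Fintype α] {l : List (Set α × α × α)}
    (hl : E.IsDefenseAttackList X l) : l.length ≤ Fintype.card (α × α) := by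
  simpa only [List.length_map] using hl.2.1.length_le_card

end IsDefenseAttackList

theorem exists_isDefenseAttackList_forall_length_le [Fintype α] :
    ∃ l, E.IsDefenseAttackList X l ∧
      ∀ l', E.IsDefenseAttackList X l' → l'.length ≤ l.length := by
  set lengths := {m | ∃ l, E.IsDefenseAttackList X l ∧ l.length = m}
  have hne : lengths.Nonempty := ⟨0, [], ⟨by simp, by simp, by simp⟩, rfl⟩
  have hbdd : BddAbove lengths := ⟨_, by rintro _ ⟨l, hl, rfl⟩; exact hl.length_le_card⟩
  obtain ⟨l, hl, hlen⟩ := Nat.sSup_mem hne hbdd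
  exact ⟨l, hl, fun l' hl' => hlen ▸ le_csSup hbdd ⟨l', hl', rfl⟩⟩

theorem not_exists_reinstatement_of_isDefenseAttackSeq {a b : α} {n : ℕ}
    {Z : Fin (n + 1) → Set α} {x y : Fin (n + 1) → α}
    (hseq : E.IsDefenseAttackSeq X a b n Z x y) : ¬ ∃ RS, E.Reinstatement X RS a b := by
  obtain ⟨hD, -, hxa, hyb, -, hprev, hfirst⟩ := hseq
  rintro ⟨RS, -, hdefeats, habRS, hreinst⟩
  have hfree : ∀ i, ∀ q ∈ RS, q.2 ∉ Z i := by
    intro i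
    induction i using WellFoundedLT.induction with
    | ind i ih =>
      intro q hq hqZ
      have hdefeat := hdefeats q hq
      rcases Nat.eq_zero_or_pos (i : ℕ) with hi | hi
      · exact hfirst ⟨q.1, hdefeat.1, q.2, (Fin.ext hi : i = 0) ▸ hqZ, hdefeat.2⟩
      rcases hprev i hi with hnone | hall
      · exact hnone ⟨q.1, hdefeat.1, q.2, hqZ, hdefeat.2⟩
      obtain ⟨-, j, hji, -, hxj, hyj⟩ := hall q.1 hdefeat.1 q.2 hqZ hdefeat.2
      obtain ⟨q', hq', hq'Z⟩ := hreinst q hq (Z j) (hxj ▸ hyj ▸ hD j)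
      exact ih j hji q' hq' hq'Z
  obtain ⟨q, hq, hqZ⟩ := hreinst (a, b) habRS _ (hxa ▸ hyb ▸ hD (Fin.last n))
  exact hfree _ q hq hqZ

theorem IsDefenseAttackList.exists_isDefenseAttackSeq {l : List (Set α × α × α)}
    (hl : E.IsDefenseAttackList X l) {n : ℕ} (hlen : l.length = n + 1) {a b : α}
    (hlast : (l[n]'(by omega)).2 = (a, b)) :
    ∃ Z x y, E.IsDefenseAttackSeq X a b n Z x y := by
  obtain ⟨hD, hnodup, hprev⟩ := hl
  let e : Fin (n + 1) → Set α × α × α := fun i => l[(i : ℕ)]'(by omega)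
  have hpairs : Function.Injective fun i => (e i).2 := by
    intro i j hij
    exact Fin.ext <| (hnodup.getElem_inj_iff (i := i) (j := j)
      (hi := by rw [List.length_map]; omega) (hj := by rw [List.length_map]; omega)).mp
      (by simpa using hij)
  have hearlier : ∀ i : Fin (n + 1), ∀ h ∈ X, ∀ z ∈ (e i).1, E.Defeats X h z →
      ∃ j : Fin (n + 1), j < i ∧ (e j).2 = (h, z) := by
    intro i h hX z hz hhz
    obtain ⟨j, hji, hj, hjhz⟩ := hprev i (by omega) h hX z hz hhz
    exact ⟨⟨j, by omega⟩, hji, hjhz⟩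
  refine ⟨fun i => (e i).1, fun i => (e i).2.1, fun i => (e i).2.2,
    fun i => hD _ (List.getElem_mem _), Function.Injective.of_comp hpairs,
    congrArg Prod.fst hlast, congrArg Prod.snd hlast, hpairs, fun i _ => Or.inr ?_, ?_⟩
  · intro h hX z hz hhz
    obtain ⟨j, hji, hjhz⟩ := hearlier i h hX z hz hhz
    exact ⟨_, j, hji, rfl, congrArg Prod.fst hjhz, congrArg Prod.snd hjhz⟩
  · rintro ⟨h, hX, z, hz, hhz⟩
    obtain ⟨j, hj0, -⟩ := hearlier 0 h hX z hz hhz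
    exact Fin.not_lt_zero j hj0

theorem reinstatement_of_forall_length_le [Finite α] {l : List (Set α × α × α)}
    (hl : E.IsDefenseAttackList X l)
    (hmax : ∀ l', E.IsDefenseAttackList X l' → l'.length ≤ l.length) {a b : α} (ha : a ∈ X)
    (hdef : E.Defeats X a b) (hnot : (a, b) ∉ l.map Prod.snd) :
    E.Reinstatement X {p | p.1 ∈ X ∧ E.Defeats X p.1 p.2 ∧ p ∉ l.map Prod.snd} a b := by
  refine ⟨Set.toFinite _, fun p hp => ⟨hp.1, hp.2.1⟩, ⟨ha, hdef, hnot⟩, ?_⟩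
  rintro p ⟨-, -, hp⟩ C hC
  by_contra hnone
  have hlonger := hmax _ <| hl.concat hC hp fun h hX z hz hhz => by
    by_contra hn
    exact hnone ⟨(h, z), ⟨hX, hhz, hn⟩, hz⟩
  simp at hlonger

end Dialectical.EAFC

open Dialectical in
theorem eafc_no_reinstatement_iff_defense_attack_sequence_general
    {α : Type} [Fintype α] (E : EAFC α) (X : Set α)
    (a b : α) (ha : a ∈ X) (hdef : E.Defeats X a b) :
    (¬ ∃ RS : Set (α × α), E.Reinstatement X RS a b) ↔
      ∃ (n : ℕ) (Z : Fin (n + 1) → Set α) (x y : Fin (n + 1) → α),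
        (∀ i, E.D (Z i) (x i) (y i)) ∧
        Function.Injective (fun i => (Z i, x i, y i)) ∧
        x (Fin.last n) = a ∧ y (Fin.last n) = b ∧
        Function.Injective (fun i => (x i, y i)) ∧
        (∀ i : Fin (n + 1), 0 < (i : ℕ) →
          (¬ ∃ h ∈ X, ∃ z ∈ Z i, E.Defeats X h z) ∨
          (∀ h ∈ X, ∀ z ∈ Z i, E.Defeats X h z →
            ∃ L : Set α, ∃ j : Fin (n + 1), (j : ℕ) < (i : ℕ) ∧
              Z j = L ∧ x j = h ∧ y j = z)) ∧
        ¬ ∃ h ∈ X, ∃ z ∈ Z 0, E.Defeats X h z := by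
  refine ⟨fun hno => ?_, fun ⟨n, Z, x, y, hseq⟩ =>
    EAFC.not_exists_reinstatement_of_isDefenseAttackSeq hseq⟩
  obtain ⟨l, hl, hmax⟩ := EAFC.exists_isDefenseAttackList_forall_length_le (E := E) (X := X)
  by_cases hab : (a, b) ∈ l.map Prod.snd
  · obtain ⟨k, hk, hkab⟩ := List.getElem_of_mem hab
    rw [List.length_map] at hk
    exact ⟨k, (hl.take (k + 1)).exists_isDefenseAttackSeq
      (by rw [List.length_take]; omega) (by simpa using hkab)⟩
  · exact absurd ⟨_, EAFC.reinstatement_of_forall_length_le hl hmax ha hdef hab⟩ hno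

open Dialectical in
/-- characterization of the absence of a reinstatement set in a finite EAFC
via sequences of defense attacks. -/
theorem eafc_no_reinstatement_iff_defense_attack_sequence
    {α : Type} [Fintype α] (E : EAFC α) (X : Set α)
    (hcf : E.ConflictFree X) (a b : α) (ha : a ∈ X) (hdef : E.Defeats X a b) :
    (¬ ∃ RS : Set (α × α), E.Reinstatement X RS a b) ↔
      ∃ (n : ℕ) (Z : Fin (n + 1) → Set α) (x y : Fin (n + 1) → α),
        (∀ i, E.D (Z i) (x i) (y i)) ∧
        Function.Injective (fun i => (Z i, x i, y i)) ∧
        x (Fin.last n) = a ∧ y (Fin.last n) = b ∧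
        Function.Injective (fun i => (x i, y i)) ∧
        (∀ i : Fin (n + 1), 0 < (i : ℕ) →
          (¬ ∃ h ∈ X, ∃ z ∈ Z i, E.Defeats X h z) ∨
          (∀ h ∈ X, ∀ z ∈ Z i, E.Defeats X h z →
            ∃ L : Set α, ∃ j : Fin (n + 1), (j : ℕ) < (i : ℕ) ∧
              Z j = L ∧ x j = h ∧ y j = z)) ∧
        ¬ ∃ h ∈ X, ∃ z ∈ Z 0, E.Defeats X h z :=
  eafc_no_reinstatement_iff_defense_attack_sequence_general E X a b ha hdef
end

section
/- Let (A, R, N) be an AFN and let X ⊆ A be a strongly coherent set. Then X^att ⊆ X^+, i.e. the discarded set of X is contained in the deactivated set of X. -/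
open Classical

universe u

/-!
If `a` is neither attacked by `X` nor has a necessity set disjoint from `X`, then `X ∪ {a}` is
coherent: concatenating powerful sequences of the finitely many elements of `X` gives a sequence
in which every element of `X` occurs after its necessities are met, and appending `a` to it gives
a powerful sequence for `a`. As `a` is discarded, `X` attacks some element of `X ∪ {a}`, which
contradicts either conflict-freeness of `X` or the choice of `a`.
-/

namespace Dialectical.AFN

variable {α : Type*} (fn : AFN α)

def IsPowerfulChain (X : Set α) (G : List α) : Prop :=
  (∀ b ∈ G, b ∈ X) ∧
  ∀ i (hi : i < G.length) B, fn.N B G[i] → ∃ b ∈ G.take i, b ∈ B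

variable {fn} {X Y s : Set α} {G G₁ G₂ : List α} {a : α}

theorem powerfulSeq_iff :
    fn.PowerfulSeq X G a ↔ G.getLast? = some a ∧ fn.IsPowerfulChain X G := by
  have earlier (i : ℕ) (B : Set α) :
      (∃ j, ∃ hj : j < G.length, j < i ∧ G[j] ∈ B) ↔ ∃ b ∈ G.take i, b ∈ B := by
    simp only [List.mem_take_iff_getElem, lt_min_iff]
    constructor
    · rintro ⟨j, hj, hji, hjB⟩
      exact ⟨_, ⟨j, ⟨hji, hj⟩, rfl⟩, hjB⟩
    · rintro ⟨_, ⟨j, ⟨hji, hj⟩, rfl⟩, hjB⟩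
      exact ⟨j, hj, hji, hjB⟩
  simp only [PowerfulSeq, IsPowerfulChain, List.get_eq_getElem, earlier]
  constructor
  · rintro ⟨-, hX, hlast, hnec⟩
    exact ⟨hlast, hX, hnec⟩
  · rintro ⟨hlast, hX, hnec⟩
    exact ⟨List.ne_nil_of_mem (List.mem_of_getLast? hlast), hX, hlast, hnec⟩

theorem Powerful.mono (h : fn.Powerful X a) (hXY : X ⊆ Y) : fn.Powerful Y a := by
  obtain ⟨haX, G, hG⟩ := h
  rw [powerfulSeq_iff] at hG
  exact ⟨hXY haX, G, powerfulSeq_iff.2 ⟨hG.1, fun b hb => hXY (hG.2.1 b hb), hG.2.2⟩⟩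

theorem IsPowerfulChain.mono (h : fn.IsPowerfulChain X G) (hXY : X ⊆ Y) :
    fn.IsPowerfulChain Y G :=
  ⟨fun b hb => hXY (h.1 b hb), h.2⟩

theorem IsPowerfulChain.append (h₁ : fn.IsPowerfulChain X G₁) (h₂ : fn.IsPowerfulChain X G₂) :
    fn.IsPowerfulChain X (G₁ ++ G₂) := by
  refine ⟨fun b hb => (List.mem_append.1 hb).elim (h₁.1 b) (h₂.1 b), fun i hi B hB => ?_⟩
  rw [List.take_append]
  rw [List.getElem_append] at hB
  split_ifs at hB with hi₁
  · obtain ⟨b, hb, hbB⟩ := h₁.2 i hi₁ B hB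
    exact ⟨b, List.mem_append_left _ hb, hbB⟩
  · obtain ⟨b, hb, hbB⟩ := h₂.2 _ (by simp at hi; omega) B hB
    exact ⟨b, List.mem_append_right _ hb, hbB⟩

theorem IsPowerfulChain.concat (hG : fn.IsPowerfulChain X G) (ha : a ∈ X)
    (hnec : ∀ B, fn.N B a → ∃ b ∈ G, b ∈ B) : fn.IsPowerfulChain X (G ++ [a]) := by
  refine ⟨fun b hb => (List.mem_append.1 hb).elim (hG.1 b) (by simp_all), fun i hi B hB => ?_⟩
  rw [List.take_append]
  rw [List.getElem_append] at hB
  split_ifs at hB with hiG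
  · obtain ⟨b, hb, hbB⟩ := hG.2 i hiG B hB
    exact ⟨b, List.mem_append_left _ hb, hbB⟩
  · obtain ⟨b, hb, hbB⟩ := hnec B (by simpa using hB)
    have hi : i = G.length := by simp at hi; omega
    exact ⟨b, List.mem_append_left _ (by simpa [hi] using hb), hbB⟩

theorem Coherent.exists_isPowerfulChain_of_finite_subset (hX : fn.Coherent X) (hs : s.Finite)
    (hsX : s ⊆ X) : ∃ G, fn.IsPowerfulChain X G ∧ ∀ b ∈ s, b ∈ G := by
  induction s, hs using Set.Finite.induction_on with
  | empty => exact ⟨[], ⟨by simp, by simp⟩, by simp⟩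
  | @insert b s _ _ ih =>
    obtain ⟨G, hG, hsG⟩ := ih ((Set.subset_insert b s).trans hsX)
    obtain ⟨-, Gb, hGb⟩ := hX b (hsX (Set.mem_insert b s))
    rw [powerfulSeq_iff] at hGb
    refine ⟨Gb ++ G, hGb.2.append hG, ?_⟩
    rintro c (rfl | hc)
    · exact List.mem_append_left _ (List.mem_of_getLast? hGb.1)
    · exact List.mem_append_right _ (hsG c hc)

theorem Coherent.insert (hX : fn.Coherent X) (hfin : X.Finite)
    (ha : ∀ B, fn.N B a → (X ∩ B).Nonempty) : fn.Coherent (insert a X) := by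
  obtain ⟨G, hG, hXG⟩ := hX.exists_isPowerfulChain_of_finite_subset hfin subset_rfl
  rintro b (rfl | hb)
  · refine ⟨Set.mem_insert b X, G ++ [b], powerfulSeq_iff.2 ⟨by simp, ?_⟩⟩
    refine (hG.mono (Set.subset_insert b X)).concat (Set.mem_insert b X) fun B hB => ?_
    obtain ⟨c, hcX, hcB⟩ := ha B hB
    exact ⟨c, hXG c hcX, hcB⟩
  · exact (hX b hb).mono (Set.subset_insert a X)

end Dialectical.AFN

open Dialectical in
/-- in an AFN, for strongly coherent `X`, the discarded set `X^att` is
contained in the deactivated set `X⁺`. -/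
theorem afn_discarded_subset_deactivated
    {α : Type} [Fintype α] (fn : AFN α) (X : Set α)
    (h : fn.StronglyCoherent X) :
    fn.discardedAtt X ⊆ fn.deactivated X := by
  intro a ha
  by_contra hna
  have hunattacked : ∀ e ∈ X, ¬ fn.R e a := fun e he hea => hna (Or.inl ⟨e, he, hea⟩)
  have hnec : ∀ B, fn.N B a → (X ∩ B).Nonempty := fun B hB =>
    Set.nonempty_iff_ne_empty.2 fun hXB => hna (Or.inr ⟨B, hB, hXB⟩)
  obtain ⟨c, hc, e, he, hec⟩ := ha _ (h.2.insert X.toFinite hnec) (Set.mem_insert a X)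
  rcases hc with rfl | hc
  · exact hunattacked e he hec
  · exact h.1 ⟨e, he, c, hc, hec⟩
end

section
/- Let SF = (A, R) be a SETAF (or an AF) and let ADF^SF = (A, L, C) be its corresponding ADF. Then ADF^SF is an AADF⁺ and a BADF. -/
open Classical

universe u

/-! The acceptance conditions of the ADF of a SETAF are antitone: accepting a parent can only
make an attack applicable. For such ADFs a minimal decisively-in interpretation sets nothing to t,
so positive dependency functions have empty t-parts, which rules out the cyclic part of an
evaluation, and every link is attacking. -/

namespace Dialectical

variable {α : Type u}

def falsePart (v : Interp α) : Interp α :=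
  fun b => if v b = some false then some false else none

@[simp]
theorem tset_falsePart (v : Interp α) : tset (falsePart v) = ∅ := by
  ext b
  simp [tset, falsePart]

@[simp]
theorem fset_falsePart (v : Interp α) : fset (falsePart v) = fset v := by
  ext b
  by_cases h : v b = some false <;> simp [fset, falsePart, h]

theorem mem_idom_falsePart {v : Interp α} {b : α} (h : v b = some false) :
    b ∈ idom (falsePart v) := by
  simp [idom, falsePart, h]

namespace ADF

variable {D : ADF α} {s : α}

theorem decisivelyIn_falsePart (hC : Antitone (D.C s)) {v : Interp α}
    (hv : D.DecisivelyIn v s) : D.DecisivelyIn (falsePart v) s := by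
  intro w hw
  -- Completing `v` by t on every further parent is the worst case for an antitone condition.
  let w' : Interp α := fun b =>
    if v b = some false then some false else if b ∈ idom v ∪ D.par s then some true else none
  have hw' : Completion v w' (idom v ∪ D.par s) := by
    refine ⟨?_, fun b hb => ?_⟩
    · ext b
      simp only [w', idom, Set.mem_ofPred_eq]
      split_ifs <;> simp_all [idom]
    · obtain ⟨x, hx⟩ := Option.ne_none_iff_exists'.mp hb
      cases x <;> simp [w', hx, Set.mem_union, hb]
  have hsub : tset w ∩ D.par s ⊆ tset w' ∩ D.par s := by
    rintro b ⟨hwb, hbs⟩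
    have hf : v b ≠ some false := fun hf => by
      have := hw.2 b (mem_idom_falsePart hf)
      simp_all [tset, falsePart]
    exact ⟨by simp [tset, w', hf, hbs], hbs⟩
  exact Bool.le_iff_imp.mp (hC hsub) (hv w' hw')

theorem tset_eq_empty_of_minDecIn (hC : Antitone (D.C s)) {v : Interp α}
    (hv : D.MinDecIn v s) : tset v = ∅ := by
  have := hv.2 (falsePart v) (decisivelyIn_falsePart hC hv.1) (by simp) (by simp)
  rw [← this.1, tset_falsePart]

theorem isAADFplus_of_antitone (hC : ∀ s, Antitone (D.C s)) : D.IsAADFplus := by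
  rintro X x Fs G B ⟨pd, ⟨hpd, -⟩, -, -, -, hFsX, -, -, -, -, -, -, -, hFs, -⟩
  refine Set.eq_empty_of_forall_notMem fun a ha => ?_
  obtain ⟨b, hb, v, hpdb, hav⟩ := hFs a ha
  have hv := ((hpd b (hFsX hb)).1 v hpdb).1
  simp [tset_eq_empty_of_minDecIn (hC b) hv] at hav

theorem attacking_of_antitone (hC : Antitone (D.C s)) (r : α) : D.Attacking r s := by
  rintro ⟨R', -, hout, hin⟩
  have := Bool.le_iff_imp.mp (hC (Set.subset_union_left : R' ⊆ R' ∪ {r})) hin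
  exact Bool.false_ne_true (hout.symm.trans this)

theorem isBADF_of_antitone (hC : ∀ s, Antitone (D.C s)) : D.IsBADF :=
  fun r s _ => Or.inr (attacking_of_antitone (hC s) r)

end ADF

theorem SETAF.toADF_C_antitone (sf : SETAF α) (a : α) : Antitone (sf.toADF.C a) := by
  intro B B' hB h
  simp only [SETAF.toADF, decide_eq_true_eq] at h ⊢
  exact fun ⟨S, hS, hSB⟩ => h ⟨S, hS, hSB.trans hB⟩

end Dialectical

open Dialectical in
theorem setaf_toADF_isAADFplus_and_isBADF_general
    {α : Type} (sf : SETAF α) :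
    sf.toADF.IsAADFplus ∧ sf.toADF.IsBADF :=
  ⟨ADF.isAADFplus_of_antitone sf.toADF_C_antitone, ADF.isBADF_of_antitone sf.toADF_C_antitone⟩

open Dialectical in
/-- the ADF corresponding to a SETAF (or AF) is an AADF⁺ and a BADF. -/
theorem setaf_toADF_isAADFplus_and_isBADF
    {α : Type} [Fintype α] (sf : SETAF α) :
    sf.toADF.IsAADFplus ∧ sf.toADF.IsBADF :=
  setaf_toADF_isAADFplus_and_isBADF_general sf
end

section
/- Let SF = (A, R) be a SETAF and ADF^SF its corresponding ADF. A set of arguments X ⊆ A is a conflict-free extension of SF if and only if it is a conflict-free extension of ADF^SF. -/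
open Classical

universe u

namespace Dialectical.SETAF

variable {α : Type*} (sf : SETAF α)

theorem subset_toADF_par {S : Set α} {a : α} (h : sf.R S a) : S ⊆ sf.toADF.par a :=
  fun _ hx => ⟨S, hx, h⟩

theorem toADF_C_eq_true_iff (a : α) (B : Set α) :
    sf.toADF.C a B = true ↔ ¬ ∃ S, sf.R S a ∧ S ⊆ B :=
  decide_eq_true_iff

theorem conflictFree_iff_forall_not_subset (X : Set α) :
    sf.ConflictFree X ↔ ∀ a ∈ X, ∀ S, sf.R S a → ¬ S ⊆ X := by
  simp only [SETAF.ConflictFree, not_exists, not_and]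
  exact ⟨fun h a ha S hR hS => h S hS a ha hR, fun h S hS a ha hR => h a ha S hR hS⟩

theorem toADF_conflictFree_iff_forall_not_subset (X : Set α) :
    sf.toADF.ConflictFree X ↔ ∀ a ∈ X, ∀ S, sf.R S a → ¬ S ⊆ X := by
  refine forall₂_congr fun a _ => ?_
  rw [toADF_C_eq_true_iff]
  have inter_par_iff : ∀ S, sf.R S a → (S ⊆ X ∩ sf.toADF.par a ↔ S ⊆ X) := fun S hR =>
    ⟨fun h => h.trans Set.inter_subset_left,
      fun h => Set.subset_inter h (sf.subset_toADF_par hR)⟩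
  constructor
  · exact fun h S hR hS => h ⟨S, hR, (inter_par_iff S hR).2 hS⟩
  · exact fun h ⟨S, hR, hS⟩ => h S hR ((inter_par_iff S hR).1 hS)

end Dialectical.SETAF

open Dialectical in
theorem setaf_toADF_conflictFree_general
    {α : Type} (sf : SETAF α) (X : Set α) :
    sf.ConflictFree X ↔ sf.toADF.ConflictFree X :=
  (sf.conflictFree_iff_forall_not_subset X).trans
    (sf.toADF_conflictFree_iff_forall_not_subset X).symm

open Dialectical in
/-- conflict-free extensions of a SETAF and of its corresponding ADF coincide. -/
theorem setaf_toADF_conflictFree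
    {α : Type} [Fintype α] (sf : SETAF α) (X : Set α) :
    sf.ConflictFree X ↔ sf.toADF.ConflictFree X :=
  setaf_toADF_conflictFree_general sf X
end

section
/- Let SF = (A, R) be a SETAF and ADF^SF its corresponding ADF. If X ⊆ A is a conflict-free extension of SF (and thus of ADF^SF), then the discarded set of X in SF coincides with the standard discarded set X^+ of X in ADF^SF. -/
open Classical

universe u

/-!
In the ADF of a SETAF, an interpretation makes `a` decisively in exactly when it makes some
member of every attacking set of `a` false. Hence if `S ⊆ X` attacks `a`, the f-part of the
interpretation that any evaluation for `a` assigns to `a` meets `S ⊆ X`. Conversely, if no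
attacking set of `a` lies inside `X`, a minimal set of arguments outside `X` hitting every
attacking set of `a` is a minimal decisively-in interpretation with empty t-part; choosing
such interpretations for all arguments gives a pd-function for which `(∅, [a], B)` is an
evaluation of `a` whose `B` avoids `X`.
-/

namespace Dialectical

variable {α : Type u}

section Interpretations

@[simp] lemma tset_mkInterp (T F : Set α) : tset (mkInterp T F) = T := by
  ext a
  simp only [tset, mkInterp, Set.mem_ofPred_eq]
  split_ifs with h1 h2 <;> simp [h1]

@[simp] lemma fset_mkInterp (T F : Set α) : fset (mkInterp T F) = F \ T := by
  ext a
  simp only [fset, mkInterp, Set.mem_ofPred_eq]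
  split_ifs with h1 h2 <;> simp_all

lemma idom_mkInterp (T F : Set α) : idom (mkInterp T F) = T ∪ F := by
  ext a
  simp only [idom, mkInterp, Set.mem_ofPred_eq]
  split_ifs with h1 h2 <;> simp_all

lemma tset_subset_idom (v : Interp α) : tset v ⊆ idom v := fun a ha => by
  simp_all [tset, idom]

lemma completion_mkInterp {v : Interp α} {T Z : Set α} (hT : Disjoint T (fset v))
    (hvZ : idom v ⊆ Z) (hTZ : T ⊆ Z) : Completion v (mkInterp (tset v ∪ T) Z) Z := by
  refine ⟨?_, fun b hb => ?_⟩
  · rw [idom_mkInterp]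
    exact Set.union_eq_self_of_subset_left
      (Set.union_subset ((tset_subset_idom v).trans hvZ) hTZ)
  · obtain ⟨t, hvb⟩ := Option.ne_none_iff_exists'.mp hb
    cases t
    · have hbT : b ∉ T := fun hbT => Set.disjoint_left.mp hT hbT hvb
      have hbt : b ∉ tset v := by simp [tset, hvb]
      simp [mkInterp, hbT, hbt, hvZ hb, hvb]
    · have hbt : b ∈ tset v := hvb
      simp [mkInterp, hbt, hvb]

end Interpretations

lemma pdT_of_eq_some {pd : α → Option (Interp α)} {a : α} {v : Interp α}
    (h : pd a = some v) : pdT pd a = tset v := by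
  ext b
  simp [pdT, h]

lemma pdF_of_eq_some {pd : α → Option (Interp α)} {a : α} {v : Interp α}
    (h : pd a = some v) : pdF pd a = fset v := by
  ext b
  simp [pdF, h]

namespace IsPAEvalWith

variable {pd : α → Option (Interp α)} {X : Set α} {x : α} {Fs : Set α} {G : List α}
  {B : Set α}

lemma mem_or_mem (hev : IsPAEvalWith pd X x Fs G B) : x ∈ Fs ∨ x ∈ G := by
  obtain ⟨-, -, -, -, -, -, -, hnil, hlast, -⟩ := hev
  by_cases hG : G = []
  · exact Or.inl (hnil hG)
  · exact Or.inr (List.mem_of_getLast? (hlast hG))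

lemma pd_ne_none (hev : IsPAEvalWith pd X x Fs G B) : pd x ≠ none := by
  have hx := hev.mem_or_mem
  obtain ⟨-, -, -, -, -, hFs, hG, -⟩ := hev
  rcases hx with hx | hx
  · exact hFs x hx
  · exact hG x hx

lemma pdF_subset (hev : IsPAEvalWith pd X x Fs G B) : pdF pd x ⊆ B := by
  have hx := hev.mem_or_mem
  obtain ⟨-, -, -, -, -, -, -, -, -, -, -, -, rfl⟩ := hev
  rcases hx with hx | hx
  · exact Set.subset_union_of_subset_left (Set.subset_biUnion_of_mem hx) _
  · exact Set.subset_union_of_subset_right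
      (Set.subset_biUnion_of_mem (u := fun a => pdF pd a) (show x ∈ {c | c ∈ G} from hx)) _

end IsPAEvalWith

namespace ADF

lemma PAEval.exists_minDecIn {D : ADF α} {X : Set α} {x : α} {Fs : Set α} {G : List α}
    {B : Set α} (hev : D.PAEval X x Fs G B) : ∃ v, D.MinDecIn v x ∧ fset v ⊆ B := by
  obtain ⟨pd, ⟨hpd, -⟩, hev⟩ := hev
  obtain ⟨v, hv⟩ := Option.ne_none_iff_exists'.mp hev.pd_ne_none
  refine ⟨v, ((hpd x hev.2.2.1).1 v hv).1, ?_⟩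
  rw [← pdF_of_eq_some hv]
  exact hev.pdF_subset

variable (D : ADF α)

lemma maxSound_univ {pd : α → Option (Interp α)} (hpd : D.PDFun Set.univ pd)
    (hsound : ∀ a, pd a ≠ none) : D.MaxSound Set.univ pd := by
  refine ⟨hpd, ?_⟩
  rintro ⟨X'', -, -, -, hss, -, -⟩
  have hdom : soundDom Set.univ pd = Set.univ := by
    ext a
    simp [soundDom, hsound a]
  rw [hdom] at hss
  exact hss.2 (Set.subset_univ _)

lemma acyclicEval_singleton (f : α → Interp α) (hf : ∀ b, D.MinDecIn (f b) b)
    (hft : ∀ b, tset (f b) = ∅) (a : α) : D.AcyclicEval Set.univ a [a] (fset (f a)) := by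
  have hpdT : ∀ b, pdT (fun c => some (f c)) b = ∅ := fun b =>
    (pdT_of_eq_some rfl).trans (hft b)
  have hpd : D.PDFun Set.univ (fun c => some (f c)) := by
    refine fun b _ => ⟨fun v hv => ?_, fun hnone => absurd hnone (by simp)⟩
    cases hv
    exact ⟨hf b, Set.subset_univ _⟩
  refine ⟨_, D.maxSound_univ hpd (by simp), ?_⟩
  refine ⟨by simp, by simp, Set.mem_univ a, Set.empty_subset _, fun _ _ => Set.mem_univ _,
    by simp, by simp, by simp, fun _ => rfl, fun i _ => by simp [hpdT], by simp, by simp, ?_⟩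
  simp [pdF_of_eq_some]

end ADF

namespace SETAF

variable (sf : SETAF α)

lemma subset_par_of_R {S : Set α} {a : α} (hS : sf.R S a) : S ⊆ sf.toADF.par a :=
  fun _ hb => ⟨S, hb, hS⟩

lemma toADF_evalCond_eq_false_iff {a : α} {w : Interp α} :
    sf.toADF.evalCond a w = false ↔ ∃ S, sf.R S a ∧ S ⊆ tset w := by
  simp only [ADF.evalCond, toADF, decide_eq_false_iff_not, not_not, Set.subset_inter_iff]
  exact exists_congr fun S => ⟨fun h => ⟨h.1, h.2.1⟩, fun h => ⟨h.1, h.2, sf.subset_par_of_R h.1⟩⟩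

lemma toADF_decisivelyIn_iff {v : Interp α} {a : α} :
    sf.toADF.DecisivelyIn v a ↔ ∀ S, sf.R S a → (S ∩ fset v).Nonempty := by
  constructor
  · intro hdec S hS
    by_contra hne
    have hcomp := completion_mkInterp
      (Set.disjoint_iff_inter_eq_empty.mpr (Set.not_nonempty_iff_eq_empty.mp hne))
      Set.subset_union_left
      ((sf.subset_par_of_R hS).trans Set.subset_union_right)
    have hout : sf.toADF.evalCond a (mkInterp (tset v ∪ S) (idom v ∪ sf.toADF.par a)) = false :=
      (sf.toADF_evalCond_eq_false_iff).mpr ⟨S, hS, by simp⟩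
    simp [hdec _ hcomp] at hout
  · intro hhit w hw
    by_contra hout
    obtain ⟨S, hS, hSt⟩ := (sf.toADF_evalCond_eq_false_iff).mp (Bool.eq_false_iff.mpr hout)
    obtain ⟨b, hbS, hbf⟩ := hhit S hS
    have hwb : w b = some false := (hw.2 b (by simp_all [idom, fset])).trans hbf
    simpa [tset, hwb] using hSt hbS

/-- A minimal set of false arguments hitting every attacking set is a minimal
decisively-in interpretation. -/
lemma exists_minDecIn [Finite α] {F₀ : Set α} {a : α}
    (hhit : ∀ S, sf.R S a → (S ∩ F₀).Nonempty) :
    ∃ F ⊆ F₀, sf.toADF.MinDecIn (mkInterp ∅ F) a := by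
  let Hits : Set α → Prop := fun F => F ⊆ F₀ ∧ ∀ S, sf.R S a → (S ∩ F).Nonempty
  obtain ⟨F, hF⟩ := (Set.toFinite {F | Hits F}).exists_minimal ⟨F₀, subset_rfl, hhit⟩
  have hFdec : sf.toADF.DecisivelyIn (mkInterp ∅ F) a := by
    simpa [toADF_decisivelyIn_iff] using hF.1.2
  refine ⟨F, hF.1.1, hFdec, fun w hw htw hfw => ?_⟩
  simp only [tset_mkInterp, fset_mkInterp, Set.sdiff_empty, Set.subset_empty_iff] at htw hfw ⊢
  refine ⟨htw, hF.eq_of_subset ⟨hfw.trans hF.1.1, ?_⟩ hfw⟩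
  exact (sf.toADF_decisivelyIn_iff).mp hw

lemma exists_acyclicEval_singleton [Finite α] {F₀ : Set α} {a : α}
    (hhit : ∀ S, sf.R S a → (S ∩ F₀).Nonempty) :
    ∃ B ⊆ F₀, sf.toADF.AcyclicEval Set.univ a [a] B := by
  have hsel : ∀ b, ∃ F ⊆ (if b = a then F₀ else Set.univ),
      sf.toADF.MinDecIn (mkInterp ∅ F) b := by
    intro b
    refine sf.exists_minDecIn fun S hS => ?_
    split_ifs with hba
    · exact hhit S (hba ▸ hS)
    · simpa using sf.nonempty_of_R S b hS
  choose F hF₀ hF using hsel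
  refine ⟨F a, by simpa using hF₀ a, ?_⟩
  simpa using sf.toADF.acyclicEval_singleton (fun b => mkInterp ∅ (F b)) hF (by simp) a

end SETAF

end Dialectical

open Dialectical in
theorem setaf_toADF_discarded_general
    {α : Type} [Fintype α] (sf : SETAF α) (X : Set α) :
    sf.discarded X = sf.toADF.stdDiscarded X := by
  ext a
  constructor
  · rintro ⟨S, hSX, hSa⟩ Fs G B hev
    obtain ⟨v, hv, hvB⟩ := hev.exists_minDecIn
    obtain ⟨b, hbS, hbv⟩ := (sf.toADF_decisivelyIn_iff).mp hv.1 S hSa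
    exact ⟨b, hvB hbv, hSX hbS⟩
  · intro hstd
    by_contra hnd
    have hhit : ∀ S, sf.R S a → (S ∩ Xᶜ).Nonempty := fun S hS =>
      Set.inter_compl_nonempty_iff.mpr fun hSX => hnd ⟨S, hSX, hS⟩
    obtain ⟨B, hBX, hev⟩ := sf.exists_acyclicEval_singleton hhit
    obtain ⟨b, hbB, hbX⟩ := hstd ∅ [a] B hev
    exact hBX hbB hbX

open Dialectical in
/-- for conflict-free `X`, the SETAF discarded set of `X` coincides with the
standard discarded set of `X` in the corresponding ADF. -/
theorem setaf_toADF_discarded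
    {α : Type} [Fintype α] (sf : SETAF α) (X : Set α)
    (h : sf.ConflictFree X) :
    sf.discarded X = sf.toADF.stdDiscarded X :=
  setaf_toADF_discarded_general sf X
end
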